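/- arXiv:1212.0595 — 9 statements merged into one kernel-verified Lean document; each statement's English description precedes it below -/
import Mathlib

section
/- Let G be a finite group and S a finite subset of G \ {0}. Let Σ(S) denote the set of all sums of nonempty subsets of S (elements summed in some order). Then for every y ∈ S, |Σ(S)| ≥ |Σ(S \ {y})| + |(Σ(S) + y) \ Σ(S)|. -/
open Pointwise

/-- The set of all sums over nonempty subsets of `S`, with elements summed in some order. -/
def sumset {G : Type*} [AddGroup G] (S : Finset G) : Set G :=
  {g | ∃ l : List G, l.Nodup ∧ l ≠ [] ∧ (∀ x ∈ l, x ∈ S) ∧ l.sum = g}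

/-- Translating back by `-y` embeds `(B + y) \ B` into `B \ A`. -/
theorem ncard_add_ncard_image_add_right_diff_le {G : Type*} [AddGroup G] {A B : Set G}
    (hB : B.Finite) (hAB : A ⊆ B) {y : G} (hAy : ∀ a ∈ A, a + y ∈ B) :
    A.ncard + (((· + y) '' B) \ B).ncard ≤ B.ncard := by
  have hshift : (((· + y) '' B) \ B).ncard ≤ (B \ A).ncard := by
    refine Set.ncard_le_ncard_of_injOn (· + -y) ?_ (add_left_injective (-y)).injOn hB.sdiff
    rintro _ ⟨⟨b, hb, rfl⟩, hbyB⟩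
    exact ⟨by simpa using hb, fun hbA => hbyB (hAy b (by simpa using hbA))⟩
  calc A.ncard + (((· + y) '' B) \ B).ncard ≤ A.ncard + (B \ A).ncard := by omega
    _ = B.ncard := by rw [add_comm, Set.ncard_sdiff_add_ncard_of_subset hAB hB]

theorem sumset_mono {G : Type*} [AddGroup G] {S T : Finset G} (h : S ⊆ T) :
    sumset S ⊆ sumset T := by
  rintro g ⟨l, hnd, hne, hmem, rfl⟩
  exact ⟨l, hnd, hne, fun x hx => h (hmem x hx), rfl⟩

theorem add_mem_sumset_of_mem_sumset_erase {G : Type*} [AddGroup G] [DecidableEq G]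
    {S : Finset G} {y g : G} (hy : y ∈ S) (hg : g ∈ sumset (S.erase y)) :
    g + y ∈ sumset S := by
  obtain ⟨l, hnd, -, hmem, rfl⟩ := hg
  have hyl : y ∉ l := fun h => (Finset.mem_erase.1 (hmem y h)).1 rfl
  refine ⟨l ++ [y], ?_, by simp, ?_, by simp⟩
  · exact hnd.append (List.nodup_singleton y) (List.disjoint_singleton.2 hyl)
  · simpa [or_imp, forall_and, hy] using fun x hx => Finset.mem_of_mem_erase (hmem x hx)

theorem stmt_3_general {G : Type*} [AddGroup G] [Fintype G] [DecidableEq G]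
    (S : Finset G) (y : G) (hy : y ∈ S) :
    (sumset (S.erase y)).ncard + (((· + y) '' sumset S) \ sumset S).ncard ≤
      (sumset S).ncard :=
  ncard_add_ncard_image_add_right_diff_le (Set.toFinite _) (sumset_mono (S.erase_subset y))
    fun _ => add_mem_sumset_of_mem_sumset_erase hy

theorem stmt_3 {G : Type*} [AddGroup G] [Fintype G] [DecidableEq G]
    (S : Finset G) (hS : (0 : G) ∉ S) (y : G) (hy : y ∈ S) :
    (sumset (S.erase y)).ncard + (((· + y) '' sumset S) \ sumset S).ncard ≤
      (sumset S).ncard :=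
  stmt_3_general S y hy
end

section
/- Let G be a finite group of odd order and let S ⊆ G with S ∩ (−S) = ∅ and |S| = 3, say S = {a, b, c}. Then |Σ(S)| ≥ 6, where Σ(S) is the set of all sums over nonempty subsets of S in any order. -/
open Pointwise

/-!
Call `x ∈ S = {x, y, z}` good if `x + y ≠ z` and `x + z ≠ y`. For a good `x`, the sums
`x, y, z, x + y, x + z` are distinct, and `x + y + z` (or `y + z` when `x + y + z = y`) is a sixth
element of `Σ(S)`. Some element is good: if `a + b = c`, then `c + a = b` would give
`a + b + a = b`, which forces `a = 0` because doubling is injective in a group of odd order, and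
`c + b = a` would give `b + b = 0`.
-/

theorem List.Nodup.length_le_ncard {α : Type*} {l : List α} {s : Set α} (hl : l.Nodup)
    (hls : ∀ x ∈ l, x ∈ s) (hs : s.Finite) : l.length ≤ s.ncard := by
  classical
  rw [← List.toFinset_card_of_nodup hl, ← Set.ncard_coe_finset]
  exact Set.ncard_le_ncard (fun x hx => hls x (by simpa using hx)) hs

section

variable {G : Type*} [AddGroup G]

theorem List.Sublist.sum_mem_sumset {S : Finset G} {l l' : List G} (h : l.Sublist l')
    (hl' : l'.Nodup) (hS : ∀ x ∈ l', x ∈ S) (hne : l ≠ []) : l.sum ∈ sumset S :=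
  ⟨l, hl'.sublist h, hne, fun x hx => hS x (h.subset hx), rfl⟩

theorem eq_zero_of_add_add_eq_of_odd_card (hodd : Odd (Nat.card G)) {u v : G}
    (h : v + u + v = u) : v = 0 := by
  have hdouble : 2 • (u + v) = 2 • u := by
    rw [two_nsmul, two_nsmul, add_assoc, ← add_assoc v, h]
  simpa using
    (Nat.Coprime.nsmul_right_bijective (Nat.coprime_two_right.mpr hodd)).injective hdouble

theorem add_ne_of_add_eq_of_odd_card (hodd : Odd (Nat.card G)) {x y z : G} (hx : x ≠ 0)
    (hy : y + y ≠ 0) (h : x + y = z) : z + x ≠ y ∧ z + y ≠ x := by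
  subst h
  refine ⟨fun h => hx (eq_zero_of_add_add_eq_of_odd_card hodd h), fun h => hy ?_⟩
  simpa [add_assoc] using h

variable [DecidableEq G]

theorem add_ne_zero_of_disjoint_neg {S : Finset G} (hS : Disjoint S (-S)) {u v : G}
    (hu : u ∈ S) (hv : v ∈ S) : u + v ≠ 0 := fun h =>
  Finset.disjoint_left.mp hS hv (Finset.mem_neg.mpr ⟨u, hu, neg_eq_of_add_eq_zero_right h⟩)

theorem six_le_ncard_sumset_of_add_ne [Finite G] {S : Finset G} {x y z : G}
    (hx : x ∈ S) (hy : y ∈ S) (hz : z ∈ S)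
    (hxy : x ≠ y) (hxz : x ≠ z) (hyz : y ≠ z) (hS : ∀ u ∈ S, ∀ v ∈ S, u + v ≠ 0)
    (hxyz : x + y ≠ z) (hxzy : x + z ≠ y) : 6 ≤ (sumset S).ncard := by
  have hx0 : x ≠ 0 := fun h => hS x hx x hx (by simp [h])
  have hy0 : y ≠ 0 := fun h => hS y hy y hy (by simp [h])
  have hz0 : z ≠ 0 := fun h => hS z hz z hz (by simp [h])
  have hsum : ∀ l : List G, l.Sublist [x, y, z] → l ≠ [] → l.sum ∈ sumset S := fun l hl =>
    hl.sum_mem_sumset (by simp [hxy, hxz, hyz]) (by simp [hx, hy, hz])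
  have hx' : x ∈ sumset S := by simpa using hsum [x] (by simp) (by simp)
  have hy' : y ∈ sumset S := by simpa using hsum [y] (by simp) (by simp)
  have hz' : z ∈ sumset S := by simpa using hsum [z] (by simp) (by simp)
  have hxy' : x + y ∈ sumset S := by simpa using hsum [x, y] (by simp) (by simp)
  have hxz' : x + z ∈ sumset S := by simpa using hsum [x, z] (by simp) (by simp)
  by_cases hxyzy : x + y + z = y
  · have hyz' : y + z ∈ sumset S := by simpa using hsum [y, z] (by simp) (by simp)
    have h1 : y + z ≠ x := fun h => hS x hx z hz <| by
      have hxx : x + x = y := by rwa [add_assoc, h] at hxyzy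
      exact add_left_cancel (a := x) (by rw [← add_assoc, hxx, h, add_zero])
    have h2 : y + z ≠ x + y := fun h => hS z hz z hz <|
      add_left_cancel (a := y) (by rw [← add_assoc, h, hxyzy, add_zero])
    refine List.Nodup.length_le_ncard (l := [x, y, z, x + y, x + z, y + z]) ?_
      (by simp [hx', hy', hz', hxy', hxz', hyz']) (Set.toFinite _)
    simp [hx0, hy0, hz0, hxy, hxz, hyz, hxyz.symm, hxzy.symm, h1.symm, h2.symm]
  · have hxyz' : x + y + z ∈ sumset S := by
      simpa [add_assoc] using hsum [x, y, z] (by simp) (by simp)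
    have h1 : x + y + z ≠ x := fun h => hS y hy z hz <| by simpa [add_assoc] using h
    have h2 : x + y + z ≠ z := fun h => hS x hx y hy <| by simpa using h
    refine List.Nodup.length_le_ncard (l := [x, y, z, x + y, x + z, x + y + z]) ?_
      (by simp [hx', hy', hz', hxy', hxz', hxyz']) (Set.toFinite _)
    simp [hx0, hy0, hz0, hxy, hxz, hyz, hxyz.symm, hxzy.symm, h1.symm, h2.symm, Ne.symm hxyzy]

end

theorem stmt_4 {G : Type*} [AddGroup G] [Fintype G] [DecidableEq G]
    (hodd : Odd (Fintype.card G)) (S : Finset G)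
    (hdisj : Disjoint S (-S)) (hcard : S.card = 3) :
    6 ≤ (sumset S).ncard := by
  obtain ⟨a, b, c, hab, hac, hbc, rfl⟩ := Finset.card_eq_three.mp hcard
  have hS : ∀ u ∈ ({a, b, c} : Finset G), ∀ v ∈ ({a, b, c} : Finset G), u + v ≠ 0 :=
    fun u hu v hv => add_ne_zero_of_disjoint_neg hdisj hu hv
  have ha : a ∈ ({a, b, c} : Finset G) := by simp
  have hb : b ∈ ({a, b, c} : Finset G) := by simp
  have hc : c ∈ ({a, b, c} : Finset G) := by simp
  have ha0 : a ≠ 0 := fun h => hS a ha a ha (by simp [h])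
  rw [← Nat.card_eq_fintype_card] at hodd
  by_cases hgood : a + b ≠ c ∧ a + c ≠ b
  · exact six_le_ncard_sumset_of_add_ne ha hb hc hab hac hbc hS hgood.1 hgood.2
  rw [not_and_or, not_not, not_not] at hgood
  rcases hgood with habc | hacb
  · obtain ⟨hcab, hcba⟩ := add_ne_of_add_eq_of_odd_card hodd ha0 (hS b hb b hb) habc
    exact six_le_ncard_sumset_of_add_ne hc ha hb hac.symm hbc.symm hab hS hcab hcba
  · obtain ⟨hbac, hbca⟩ := add_ne_of_add_eq_of_odd_card hodd ha0 (hS c hc c hc) hacb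
    exact six_le_ncard_sumset_of_add_ne hb ha hc hab.symm hbc hac hS hbac hbca
end

section
/- Let G be a group of order 9 and A ⊆ G \ {0} with |A| = 3. Then |Σ(A)| ≥ 5, where Σ(A) is the set of all sums over nonempty subsets of A. -/
open Pointwise

theorem stmt_6 {G : Type*} [AddGroup G] [Fintype G] [DecidableEq G]
    (h9 : Fintype.card G = 9) (A : Finset G) (h0 : (0 : G) ∉ A)
    (hcard : A.card = 3) :
    5 ≤ (sumset A).ncard := by
  have hcomm : ∀ x y : G, x + y = y + x := by
    intro x y
    have : Fact (Nat.Prime 3) := ⟨by norm_num⟩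
    exact IsPGroup.commutative_of_card_eq_prime_sq (p := 3) (G := Multiplicative G)
      (by simp [Nat.card_eq_fintype_card, h9]) (Multiplicative.ofAdd x) (Multiplicative.ofAdd y)
  letI : AddCommGroup G := { ‹AddGroup G› with add_comm := hcomm }
  -- every element of 2-torsion is zero
  have htor : ∀ x : G, x + x = 0 → x = 0 := by
    intro x hx
    have h9x : Fintype.card G • x = 0 := card_nsmul_eq_zero
    rw [h9] at h9x
    have h8 : (8 : ℕ) • x = (4 : ℕ) • (x + x) := by
      rw [smul_add]; abel
    have h8' : (8 : ℕ) • x = 0 := by rw [h8, hx, smul_zero]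
    calc x = (9 : ℕ) • x - (8 : ℕ) • x := by
          rw [show (9 : ℕ) = 8 + 1 from rfl, add_nsmul, one_nsmul]; abel
      _ = 0 := by rw [h9x, h8', sub_zero]
  obtain ⟨a, b, c, hab, hac, hbc, hA⟩ := Finset.card_eq_three.mp hcard
  have ha : a ∈ A := by simp [hA]
  have hb : b ∈ A := by simp [hA]
  have hc : c ∈ A := by simp [hA]
  have ha0 : a ≠ 0 := fun h => h0 (h ▸ ha)
  have hb0 : b ≠ 0 := fun h => h0 (h ▸ hb)
  have hc0 : c ≠ 0 := fun h => h0 (h ▸ hc)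
  -- membership lemmas
  have mem1 : ∀ x ∈ A, x ∈ sumset A := by
    intro x hx
    exact ⟨[x], by simp, by simp, by simpa using hx, by simp⟩
  have mem2 : ∀ x ∈ A, ∀ y ∈ A, x ≠ y → x + y ∈ sumset A := by
    intro x hx y hy hxy
    exact ⟨[x, y], by simp [hxy], by simp, by simp [hx, hy], by simp⟩
  -- generic finishing lemma
  have key : ∀ x y : G, x ∈ sumset A → y ∈ sumset A →
      x ∉ ({a, b, c} : Finset G) → y ∉ ({a, b, c} : Finset G) → x ≠ y →
      5 ≤ (sumset A).ncard := by
    intro x y hxs hys hxn hyn hxy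
    have hsub : ↑({a, b, c, x, y} : Finset G) ⊆ sumset A := by
      intro z hz
      simp only [Finset.coe_insert, Finset.coe_singleton, Set.mem_insert_iff,
        Set.mem_singleton_iff] at hz
      rcases hz with rfl | rfl | rfl | rfl | rfl
      · exact mem1 _ ha
      · exact mem1 _ hb
      · exact mem1 _ hc
      · exact hxs
      · exact hys
    have hcard5 : ({a, b, c, x, y} : Finset G).card = 5 := by
      simp only [Finset.mem_insert, Finset.mem_singleton, not_or] at hxn hyn
      obtain ⟨hxa, hxb, hxc⟩ := hxn
      obtain ⟨hya, hyb, hyc⟩ := hyn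
      rw [Finset.card_insert_of_notMem (by simp [hab, hac, Ne.symm hxa, Ne.symm hya]),
        Finset.card_insert_of_notMem (by simp [hbc, Ne.symm hxb, Ne.symm hyb]),
        Finset.card_insert_of_notMem (by simp [Ne.symm hxc, Ne.symm hyc]),
        Finset.card_insert_of_notMem (by simp [hxy]), Finset.card_singleton]
    calc (5 : ℕ) = (↑({a, b, c, x, y} : Finset G) : Set G).ncard := by
          rw [Set.ncard_coe_finset, hcard5]
      _ ≤ (sumset A).ncard := Set.ncard_le_ncard hsub (Set.toFinite _)
  -- simple non-collisions
  have gen : ∀ x y : G, y ≠ 0 → x + y ≠ x := by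
    intro x y hy h
    apply hy
    have e : y = (x + y) - x := by abel
    rw [h, sub_self] at e
    exact e
  have naba : a + b ≠ a := gen a b hb0
  have nabb : a + b ≠ b := by rw [hcomm]; exact gen b a ha0
  have naca : a + c ≠ a := gen a c hc0
  have nacc : a + c ≠ c := by rw [hcomm]; exact gen c a ha0
  have nbcb : b + c ≠ b := gen b c hc0
  have nbcc : b + c ≠ c := by rw [hcomm]; exact gen c b hb0
  have dabac : a + b ≠ a + c := fun h => hbc (add_left_cancel h)
  have dabbc : a + b ≠ b + c := by
    rw [hcomm a b]
    exact fun h => hac (add_left_cancel h)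
  have dacbc : a + c ≠ b + c := fun h => hab (add_right_cancel h)
  by_cases P1 : a + b = c
  · have P2 : a + c ≠ b := by
      intro h
      apply ha0
      apply htor
      have e : a + a = ((a + b) + (a + c)) - b - c := by abel
      rw [P1, h] at e
      rw [e]; abel
    have P3 : b + c ≠ a := by
      intro h
      apply hb0
      apply htor
      have e : b + b = ((a + b) + (b + c)) - a - c := by abel
      rw [P1, h] at e
      rw [e]; abel
    refine key (a + c) (b + c) (mem2 _ ha _ hc hac) (mem2 _ hb _ hc hbc) ?_ ?_ dacbc
    · simp only [Finset.mem_insert, Finset.mem_singleton, not_or]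
      exact ⟨naca, P2, nacc⟩
    · simp only [Finset.mem_insert, Finset.mem_singleton, not_or]
      exact ⟨P3, nbcb, nbcc⟩
  · by_cases P2 : a + c = b
    · have P3 : b + c ≠ a := by
        intro h
        apply hc0
        apply htor
        have e : c + c = ((a + c) + (b + c)) - a - b := by abel
        rw [P2, h] at e
        rw [e]; abel
      refine key (a + b) (b + c) (mem2 _ ha _ hb hab) (mem2 _ hb _ hc hbc) ?_ ?_ dabbc
      · simp only [Finset.mem_insert, Finset.mem_singleton, not_or]
        exact ⟨naba, nabb, P1⟩
      · simp only [Finset.mem_insert, Finset.mem_singleton, not_or]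
        exact ⟨P3, nbcb, nbcc⟩
    · refine key (a + b) (a + c) (mem2 _ ha _ hb hab) (mem2 _ ha _ hc hac) ?_ ?_ dabac
      · simp only [Finset.mem_insert, Finset.mem_singleton, not_or]
        exact ⟨naba, nabb, P1⟩
      · simp only [Finset.mem_insert, Finset.mem_singleton, not_or]
        exact ⟨naca, P2, nacc⟩
end

section
/- Let G be a group of order 9 and A ⊆ G \ {0} with |A| = 4. Then |Σ(A)| ≥ 7, where Σ(A) is the set of all sums over nonempty subsets of A. -/
open Pointwise

/-- Finset version of `sumset` in a commutative setting. -/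
def fSum {G : Type*} [AddCommMonoid G] [DecidableEq G] (A : Finset G) : Finset G :=
  (A.powerset.filter (·.Nonempty)).image (Finset.sum · id)

set_option maxRecDepth 40000 in
lemma core9 : ∀ A : Finset (ZMod 9), (0 : ZMod 9) ∉ A → A.card = 4 →
    7 ≤ (fSum A).card := by decide

set_option maxRecDepth 40000 in
lemma core33 : ∀ A : Finset (Fin 2 → ZMod 3), (0 : Fin 2 → ZMod 3) ∉ A → A.card = 4 →
    7 ≤ (fSum A).card := by decide

lemma sumset_eq_fSum {G : Type*} [AddCommGroup G] [DecidableEq G] (A : Finset G) :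
    sumset A = ↑(fSum A) := by
  ext g
  simp only [sumset, Set.mem_setOf_eq, fSum, Finset.coe_image, Set.mem_image, Finset.mem_coe,
    Finset.mem_filter, Finset.mem_powerset]
  constructor
  · rintro ⟨l, hnd, hne, hmem, rfl⟩
    refine ⟨l.toFinset, ⟨⟨fun x hx => hmem x (List.mem_toFinset.mp hx), ?_⟩, ?_⟩⟩
    · obtain ⟨a, ha⟩ := List.exists_mem_of_ne_nil l hne
      exact ⟨a, List.mem_toFinset.mpr ha⟩
    · rw [List.sum_toFinset id hnd]; simp
  · rintro ⟨s, ⟨hsub, hne⟩, rfl⟩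
    refine ⟨s.toList, s.nodup_toList, ?_, fun x hx => hsub (Finset.mem_toList.mp hx), ?_⟩
    · simpa [← Finset.toList_eq_nil] using hne.ne_empty
    · rw [← Finset.sum_map_toList s id]; simp

lemma sumset_image {G H : Type*} [AddGroup G] [AddGroup H] [DecidableEq H]
    (e : G ≃+ H) (A : Finset G) :
    sumset (A.image e) = ⇑e '' sumset A := by
  ext h
  constructor
  · rintro ⟨l, hnd, hne, hmem, rfl⟩
    refine ⟨(l.map e.symm).sum, ⟨l.map e.symm, hnd.map e.symm.injective, by simp [hne],
      ?_, rfl⟩, ?_⟩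
    · intro x hx
      obtain ⟨y, hy, rfl⟩ := List.mem_map.mp hx
      obtain ⟨a, ha, rfl⟩ := Finset.mem_image.mp (hmem y hy)
      simpa using ha
    · rw [map_list_sum e]
      simp [List.map_map, Function.comp_def]
  · rintro ⟨g, ⟨l, hnd, hne, hmem, rfl⟩, rfl⟩
    refine ⟨l.map e, hnd.map e.injective, by simp [hne], ?_, (map_list_sum e l).symm⟩
    intro x hx
    obtain ⟨y, hy, rfl⟩ := List.mem_map.mp hx
    exact Finset.mem_image.mpr ⟨y, hmem y hy, rfl⟩

lemma key_card {G H : Type*} [AddGroup G] [AddCommGroup H] [DecidableEq H] [DecidableEq G]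
    (e : G ≃+ H) (A : Finset G)
    (hH : ∀ B : Finset H, (0 : H) ∉ B → B.card = 4 → 7 ≤ (fSum B).card)
    (h0 : (0 : G) ∉ A) (hcard : A.card = 4) :
    7 ≤ (sumset A).ncard := by
  have h0' : (0 : H) ∉ A.image e := by
    intro hx
    obtain ⟨a, ha, hea⟩ := Finset.mem_image.mp hx
    exact h0 (by rwa [show a = 0 from e.injective (by simpa using hea)] at ha)
  have hc' : (A.image e).card = 4 := by
    rw [Finset.card_image_of_injective _ e.injective, hcard]
  have hmain := hH (A.image e) h0' hc'
  have heq : sumset (A.image e) = ⇑e '' sumset A := sumset_image e A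
  have hnc : (sumset (A.image e)).ncard = (sumset A).ncard := by
    rw [heq, Set.ncard_image_of_injective _ e.injective]
  rw [← hnc, sumset_eq_fSum, Set.ncard_coe_finset]
  exact hmain

theorem stmt_7 {G : Type*} [AddGroup G] [Fintype G] [DecidableEq G]
    (h9 : Fintype.card G = 9) (A : Finset G) (h0 : (0 : G) ∉ A)
    (hcard : A.card = 4) :
    7 ≤ (sumset A).ncard := by
  haveI : Fact (Nat.Prime 3) := ⟨by norm_num⟩
  have h9' : Nat.card (Multiplicative G) = 3 ^ 2 := by
    rw [Nat.card_congr (Multiplicative.ofAdd (α := G)).symm, Nat.card_eq_fintype_card, h9]; norm_num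
  have hc := IsPGroup.commutative_of_card_eq_prime_sq (p := 3) (G := Multiplicative G) h9'
  have hcomm : ∀ a b : G, a + b = b + a := fun a b =>
    hc (Multiplicative.ofAdd a) (Multiplicative.ofAdd b)
  letI cg : AddCommGroup G := { ‹AddGroup G› with add_comm := hcomm }
  by_cases hcyc : ∃ g : G, addOrderOf g = 9
  · obtain ⟨g, hg⟩ := hcyc
    haveI : IsAddCyclic G := isAddCyclic_of_addOrderOf_eq_card g (by rw [hg, Nat.card_eq_fintype_card, h9])
    have e : ZMod 9 ≃+ G := by
      have h := zmodAddCyclicAddEquiv (G := G) inferInstance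
      rwa [Nat.card_eq_fintype_card, h9] at h
    exact key_card e.symm A core9 h0 hcard
  · have h3 : ∀ g : G, (3 : ℕ) • g = 0 := by
      intro g
      rw [← addOrderOf_dvd_iff_nsmul_eq_zero]
      have hd : addOrderOf g ∣ 3 ^ 2 := by
        have := addOrderOf_dvd_card (x := g); rwa [h9] at this
      obtain ⟨k, hk2, hkeq⟩ := (Nat.dvd_prime_pow (by norm_num)).mp hd
      have hk1 : k ≤ 1 := by
        rcases Nat.lt_or_ge k 2 with h | h
        · omega
        · exact absurd ⟨g, by rw [hkeq, show k = 2 by omega]; norm_num⟩ hcyc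
      calc addOrderOf g = 3 ^ k := hkeq
        _ ∣ 3 ^ 1 := Nat.pow_dvd_pow 3 hk1
        _ = 3 := by norm_num
    letI : Module (ZMod 3) G := AddCommGroup.zmodModule h3
    haveI : Module.Finite (ZMod 3) G := Module.Finite.of_finite
    have hrank : Module.finrank (ZMod 3) G = 2 := by
      have hcard' := Module.card_eq_pow_finrank (K := ZMod 3) (V := G)
      rw [h9, ZMod.card] at hcard'
      have : (3:ℕ) ^ 2 = 3 ^ Module.finrank (ZMod 3) G := by norm_num at hcard' ⊢; omega
      exact (Nat.pow_right_injective (by norm_num) this).symm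
    have e : G ≃+ (Fin 2 → ZMod 3) := by
      have b := Module.finBasis (ZMod 3) G
      rw [hrank] at b
      exact b.equivFun.toAddEquiv
    exact key_card e A core33 h0 hcard
end

section
/- Let G be a group of order 9 and A ⊆ G with |A| = 4. Then |Σ_2(A)| ≥ 5, where Σ_2(A) = {a_i + a_j : a_i, a_j ∈ A, a_i ≠ a_j} is the set of sums of two distinct elements of A. -/
open Pointwise

theorem aux8 {G : Type*} [AddCommGroup G] [Fintype G] [DecidableEq G]
    (h9 : Fintype.card G = 9) (A : Finset G) (hcard : A.card = 4) :
    5 ≤ {x : G | ∃ a ∈ A, ∃ b ∈ A, a ≠ b ∧ a + b = x}.ncard := by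
  have hinj : ∀ x y : G, x + x = y + y → x = y := by
    intro x y h
    have hz : (x - y) + (x - y) = 0 := by
      have h0 : (x + x) - (y + y) = 0 := by rw [h]; abel
      rw [← h0]; abel
    have h2 : addOrderOf (x - y) ∣ 2 := by
      apply addOrderOf_dvd_of_nsmul_eq_zero
      rw [two_nsmul]; exact hz
    have h9' : addOrderOf (x - y) ∣ 9 := h9 ▸ addOrderOf_dvd_card
    have h1 : addOrderOf (x - y) ∣ 1 := Nat.dvd_gcd h2 h9'
    have he1 : addOrderOf (x - y) = 1 := Nat.eq_one_of_dvd_one h1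
    have : x - y = 0 := AddMonoid.addOrderOf_eq_one_iff.mp he1
    exact sub_eq_zero.mp this
  -- extract the four elements
  obtain ⟨a, ha⟩ := Finset.card_pos.mp (by omega : 0 < A.card)
  have hB : (A.erase a).card = 3 := by rw [Finset.card_erase_of_mem ha, hcard]
  obtain ⟨b, c, d, hbc, hbd, hcd, hBe⟩ := Finset.card_eq_three.mp hB
  have hbA : b ∈ A := Finset.mem_of_mem_erase (hBe ▸ (by simp : b ∈ ({b,c,d} : Finset G)))
  have hcA : c ∈ A := Finset.mem_of_mem_erase (hBe ▸ (by simp : c ∈ ({b,c,d} : Finset G)))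
  have hdA : d ∈ A := Finset.mem_of_mem_erase (hBe ▸ (by simp : d ∈ ({b,c,d} : Finset G)))
  have hab : a ≠ b := fun h => (Finset.ne_of_mem_erase (hBe ▸ (by simp : b ∈ ({b,c,d} : Finset G)))) h.symm
  have hac : a ≠ c := fun h => (Finset.ne_of_mem_erase (hBe ▸ (by simp : c ∈ ({b,c,d} : Finset G)))) h.symm
  have had : a ≠ d := fun h => (Finset.ne_of_mem_erase (hBe ▸ (by simp : d ∈ ({b,c,d} : Finset G)))) h.symm
  set S := {x : G | ∃ a ∈ A, ∃ b ∈ A, a ≠ b ∧ a + b = x} with hS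
  -- generic machinery: a 5-element subset gives the bound
  have key : ∀ T : Finset G, (↑T : Set G) ⊆ S → 5 ≤ T.card → 5 ≤ S.ncard := by
    intro T hsub hT
    calc 5 ≤ T.card := hT
      _ = (↑T : Set G).ncard := (Set.ncard_coe_finset T).symm
      _ ≤ S.ncard := Set.ncard_le_ncard hsub (Set.toFinite S)
  -- mutual exclusion lemmas
  have ex1 : a + c = b + d → a + d = b + c → False := by
    intro h1 h2
    have : (a + c) + (a + d) = (b + d) + (b + c) := by rw [h1, h2]
    have : a + a = b + b := by
      have h3 : (a + a) + (c + d) = (b + b) + (c + d) := by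
        calc (a + a) + (c + d) = (a + c) + (a + d) := by abel
          _ = (b + d) + (b + c) := this
          _ = (b + b) + (c + d) := by abel
      exact add_right_cancel h3
    exact hab (hinj _ _ this)
  have ex2 : a + b = c + d → a + c = b + d → False := by
    intro h1 h2
    have h3 : (a + a) + (b + c) = (d + d) + (b + c) := by
      calc (a + a) + (b + c) = (a + b) + (a + c) := by abel
        _ = (c + d) + (b + d) := by rw [h1, h2]
        _ = (d + d) + (b + c) := by abel
    exact had (hinj _ _ (add_right_cancel h3))
  have ex3 : a + b = c + d → a + d = b + c → False := by
    intro h1 h2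
    have h3 : (a + a) + (b + d) = (c + c) + (b + d) := by
      calc (a + a) + (b + d) = (a + b) + (a + d) := by abel
        _ = (c + d) + (b + c) := by rw [h1, h2]
        _ = (c + c) + (b + d) := by abel
    exact hac (hinj _ _ (add_right_cancel h3))
  -- membership of sums in S
  have mem : ∀ x y : G, x ∈ A → y ∈ A → x ≠ y → x + y ∈ S := by
    intro x y hx hy hxy
    exact ⟨x, hx, y, hy, hxy, rfl⟩
  -- cancellation helpers for distinctness
  have ne1 : ∀ x y z : G, y ≠ z → x + y ≠ x + z := fun x y z h he => h (add_left_cancel he)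
  have ne2 : ∀ x y z : G, x ≠ z → x + y ≠ z + y := fun x y z h he => h (add_right_cancel he)
  have ne3 : ∀ x y z : G, x ≠ z → x + y ≠ y + z := by
    intro x y z h he; exact h (add_right_cancel (he.trans (add_comm y z)))
  by_cases hA : a + c = b + d
  · -- use T2 = {a+b, a+c, a+d, b+c, c+d}
    have hnab : a + b ≠ c + d := fun h => ex2 h hA
    have hnad : a + d ≠ b + c := fun h => ex1 hA h
    apply key {a + b, a + c, a + d, b + c, c + d}
    · intro x hx
      simp only [Finset.coe_insert, Finset.coe_singleton, Set.mem_insert_iff,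
        Set.mem_singleton_iff] at hx
      rcases hx with rfl | rfl | rfl | rfl | rfl
      · exact mem a b ha hbA hab
      · exact mem a c ha hcA hac
      · exact mem a d ha hdA had
      · exact mem b c hbA hcA hbc
      · exact mem c d hcA hdA hcd
    · have e1 : a + b ≠ a + c := ne1 a b c hbc
      have e2 : a + b ≠ a + d := ne1 a b d hbd
      have e3 : a + b ≠ b + c := fun h => hac (add_left_cancel ((add_comm a b).symm.trans h))
      have e4 : a + c ≠ a + d := ne1 a c d hcd
      have e5 : a + c ≠ b + c := ne2 a c b hab
      have e6 : a + c ≠ c + d := fun h => had (add_left_cancel ((add_comm a c).symm.trans h))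
      have e7 : a + d ≠ c + d := ne2 a d c hac
      have e8 : b + c ≠ c + d := fun h => hbd (add_left_cancel ((add_comm b c).symm.trans h))
      rw [Finset.card_insert_of_notMem (by simp [e1, e2, e3, hnab]),
        Finset.card_insert_of_notMem (by simp [e4, e5, e6]),
        Finset.card_insert_of_notMem (by simp [hnad, e7]),
        Finset.card_insert_of_notMem (by simp [e8])]
      simp
  · by_cases hA2 : a + d = b + c
    · -- use T3 = {a+b, a+c, a+d, b+d, c+d}
      have hnab : a + b ≠ c + d := fun h => ex3 h hA2
      apply key {a + b, a + c, a + d, b + d, c + d}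
      · intro x hx
        simp only [Finset.coe_insert, Finset.coe_singleton, Set.mem_insert_iff,
          Set.mem_singleton_iff] at hx
        rcases hx with rfl | rfl | rfl | rfl | rfl
        · exact mem a b ha hbA hab
        · exact mem a c ha hcA hac
        · exact mem a d ha hdA had
        · exact mem b d hbA hdA hbd
        · exact mem c d hcA hdA hcd
      · have e1 : a + b ≠ a + c := ne1 a b c hbc
        have e2 : a + b ≠ a + d := ne1 a b d hbd
        have e3 : a + b ≠ b + d := fun h => had (add_left_cancel ((add_comm a b).symm.trans h))
        have e4 : a + c ≠ a + d := ne1 a c d hcd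
        have e5 : a + c ≠ c + d := fun h => had (add_left_cancel ((add_comm a c).symm.trans h))
        have e6 : a + d ≠ b + d := ne2 a d b hab
        have e7 : a + d ≠ c + d := ne2 a d c hac
        have e8 : b + d ≠ c + d := ne2 b d c hbc
        rw [Finset.card_insert_of_notMem (by simp [e1, e2, e3, hnab]),
          Finset.card_insert_of_notMem (by simp [e4, hA, e5]),
          Finset.card_insert_of_notMem (by simp [e6, e7]),
          Finset.card_insert_of_notMem (by simp [e8])]
        simp
    · -- use T1 = {a+b, a+c, a+d, b+c, b+d}
      apply key {a + b, a + c, a + d, b + c, b + d}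
      · intro x hx
        simp only [Finset.coe_insert, Finset.coe_singleton, Set.mem_insert_iff,
          Set.mem_singleton_iff] at hx
        rcases hx with rfl | rfl | rfl | rfl | rfl
        · exact mem a b ha hbA hab
        · exact mem a c ha hcA hac
        · exact mem a d ha hdA had
        · exact mem b c hbA hcA hbc
        · exact mem b d hbA hdA hbd
      · have e1 : a + b ≠ a + c := ne1 a b c hbc
        have e2 : a + b ≠ a + d := ne1 a b d hbd
        have e3 : a + b ≠ b + c := fun h => hac (add_left_cancel ((add_comm a b).symm.trans h))
        have e4 : a + b ≠ b + d := fun h => had (add_left_cancel ((add_comm a b).symm.trans h))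
        have e5 : a + c ≠ a + d := ne1 a c d hcd
        have e6 : a + c ≠ b + c := ne2 a c b hab
        have e7 : a + d ≠ b + c := hA2
        have e8 : a + d ≠ b + d := ne2 a d b hab
        have e9 : b + c ≠ b + d := ne1 b c d hcd
        rw [Finset.card_insert_of_notMem (by simp [e1, e2, e3, e4]),
          Finset.card_insert_of_notMem (by simp [e5, e6, hA]),
          Finset.card_insert_of_notMem (by simp [e7, e8]),
          Finset.card_insert_of_notMem (by simp [e9])]
        simp

theorem stmt_8 {G : Type*} [AddGroup G] [Fintype G] [DecidableEq G]
    (h9 : Fintype.card G = 9) (A : Finset G) (hcard : A.card = 4) :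
    5 ≤ {x : G | ∃ a ∈ A, ∃ b ∈ A, a ≠ b ∧ a + b = x}.ncard := by
  haveI : Fact (Nat.Prime 3) := ⟨by norm_num⟩
  have hcomm : ∀ x y : Multiplicative G, x * y = y * x :=
    IsPGroup.commutative_of_card_eq_prime_sq (p := 3)
      (by rw [Nat.card_eq_fintype_card]; simpa using h9)
  letI : AddCommGroup G := { (inferInstance : AddGroup G) with
    add_comm := fun x y => hcomm (Multiplicative.ofAdd x) (Multiplicative.ofAdd y) }
  exact aux8 h9 A hcard
end

section
/- Let G be a group of order 9, A ⊆ G with |A| = 4, and B ⊆ G with |B| ≥ 2. Then |A + B| ≥ 5. -/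
open Pointwise

theorem stmt_9 {G : Type*} [AddGroup G] [Fintype G] [DecidableEq G]
    (h9 : Fintype.card G = 9) (A B : Finset G)
    (hA : A.card = 4) (hB : 2 ≤ B.card) :
    5 ≤ (A + B).card := by
  by_contra hcon
  push_neg at hcon
  obtain ⟨b1, hb1, b2, hb2, hne⟩ := Finset.one_lt_card.mp hB
  have hcard1 : (A + {b1}).card = 4 := by
    rw [Finset.add_singleton, Finset.card_vadd_finset, hA]
  have hcard2 : (A + {b2}).card = 4 := by
    rw [Finset.add_singleton, Finset.card_vadd_finset, hA]
  have hA1 : A + {b1} = A + B :=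
    Finset.eq_of_subset_of_card_le
      (Finset.add_subset_add_left (Finset.singleton_subset_iff.mpr hb1))
      (by omega)
  have hA2 : A + {b2} = A + B :=
    Finset.eq_of_subset_of_card_le
      (Finset.add_subset_add_left (Finset.singleton_subset_iff.mpr hb2))
      (by omega)
  set d := b2 - b1 with hd
  have hdne : d ≠ 0 := sub_ne_zero.mpr (Ne.symm hne)
  -- A is closed under adding d
  have hclosed : ∀ a ∈ A, a + d ∈ A := by
    intro a ha
    have h2 : a + b2 ∈ A + {b1} := by
      rw [hA1, ← hA2]
      exact Finset.add_mem_add ha (Finset.mem_singleton_self b2)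
    rw [Finset.mem_add] at h2
    obtain ⟨a', ha', c, hc, heq⟩ := h2
    rw [Finset.mem_singleton] at hc
    rw [hc] at heq
    have hkey : a + d + b1 = a' + b1 := by
      rw [heq, hd, add_assoc, sub_add_cancel]
    have : a + d = a' := add_right_cancel hkey
    rwa [this]
  have hm : ∀ (n : ℕ), ∀ a ∈ A, a + n • d ∈ A := by
    intro n
    induction n with
    | zero => intro a ha; simpa using ha
    | succ k ih =>
        intro a ha
        have := hclosed (a + k • d) (ih a ha)
        rwa [add_assoc, ← succ_nsmul] at this
  -- order of d
  have hpos : 0 < addOrderOf d := addOrderOf_pos d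
  have hdvd : addOrderOf d ∣ 9 := h9 ▸ addOrderOf_dvd_card
  have hle : addOrderOf d ≤ 9 := Nat.le_of_dvd (by norm_num) hdvd
  have hone : addOrderOf d ≠ 1 := by
    simpa using hdne
  have hk : ∀ k : ℕ, 0 < k → k < addOrderOf d → k • d ≠ 0 := by
    intro k hk0 hklt hkd
    have := Nat.le_of_dvd hk0 (addOrderOf_dvd_iff_nsmul_eq_zero.mpr hkd)
    omega
  have hcases : addOrderOf d = 3 ∨ addOrderOf d = 9 := by
    interval_cases h : addOrderOf d <;> omega
  have key : ∀ i j : ℕ, i < j → j < addOrderOf d → i • d ≠ j • d := by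
    intro i j hij hj he
    apply hk (j - i) (by omega) (by omega)
    have h1 : (i + (j - i)) • d = i • d + (j - i) • d := add_nsmul d i (j - i)
    rw [Nat.add_sub_cancel' hij.le, ← he] at h1
    exact (left_eq_add.mp h1)
  have hinj : ∀ (a : G) (i j : ℕ), i < addOrderOf d → j < addOrderOf d →
      a + i • d = a + j • d → i = j := by
    intro a i j hi hj heq
    have h' : i • d = j • d := add_left_cancel heq
    rcases lt_trichotomy i j with h | h | h
    · exact absurd h' (key i j h hj)
    · exact h
    · exact absurd h'.symm (key j i h hi)
  obtain ⟨a, ha⟩ := Finset.card_pos.mp (by omega : 0 < A.card)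
  rcases hcases with h3 | h9'
  · -- order 3 : two cosets
    have h3d : d + d + d = 0 := by
      have h := addOrderOf_nsmul_eq_zero d
      rw [h3, show (3:ℕ) = 2 + 1 from rfl, add_nsmul, two_nsmul, one_nsmul] at h
      exact h
    have hdd : d + d ≠ 0 := by
      intro h
      rw [h, zero_add] at h3d
      exact hdne h3d
    -- basic inequalities
    have n1 : a ≠ a + d := fun h => hdne (left_eq_add.mp h)
    have n2 : a ≠ a + (d + d) := fun h => hdd (left_eq_add.mp h)
    have n5 : a + d ≠ a + (d + d) := by
      intro h
      have : d = d + d := add_left_cancel h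
      exact hdne (left_eq_add.mp this)
    set S : Finset G := {a, a + d, a + (d + d)} with hS
    have hScard : S.card = 3 := by
      rw [hS, Finset.card_insert_of_notMem (by simp [n1, n2]),
        Finset.card_insert_of_notMem (by simp [n5]), Finset.card_singleton]
    have m2 : a + d ∈ A := hclosed a ha
    have m3 : a + (d + d) ∈ A := by
      have := hclosed _ m2
      rwa [add_assoc] at this
    have hSsub : S ⊆ A := by
      intro x hx
      rw [hS] at hx
      simp only [Finset.mem_insert, Finset.mem_singleton] at hx
      rcases hx with rfl | rfl | rfl
      exacts [ha, m2, m3]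
    have hss : S ⊂ A := hSsub.ssubset_of_ne (by intro h; rw [h, hA] at hScard; omega)
    obtain ⟨a', ha'A, ha'S⟩ := Finset.exists_of_ssubset hss
    have mS : ∀ x, x = a ∨ x = a + d ∨ x = a + (d + d) → x ∈ S := by
      intro x hx
      rw [hS]
      simp only [Finset.mem_insert, Finset.mem_singleton]
      exact hx
    -- inequalities involving a'
    have n3 : a ≠ a' := fun h => ha'S (mS a' (Or.inl h.symm))
    have n6 : a + d ≠ a' := fun h => ha'S (mS a' (Or.inr (Or.inl h.symm)))
    have n8 : a + (d + d) ≠ a' := fun h => ha'S (mS a' (Or.inr (Or.inr h.symm)))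
    have n4 : a ≠ a' + d := by
      intro h
      apply ha'S
      apply mS a' (Or.inr (Or.inr ?_))
      have key4 : a + (d + d) + d = a := by rw [add_assoc, h3d, add_zero]
      have : a' + d = a + (d + d) + d := by rw [key4, ← h]
      exact add_right_cancel this
    have n7 : a + d ≠ a' + d := fun h => n3 (add_right_cancel h)
    have n9 : a + (d + d) ≠ a' + d := by
      intro h
      rw [← add_assoc] at h
      exact n6 (add_right_cancel h)
    have n10 : a' ≠ a' + d := fun h => hdne (left_eq_add.mp h)
    have hsub5 : ({a, a + d, a + (d + d), a', a' + d} : Finset G) ⊆ A := by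
      intro x hx
      simp only [Finset.mem_insert, Finset.mem_singleton] at hx
      rcases hx with rfl | rfl | rfl | rfl | rfl
      exacts [ha, m2, m3, ha'A, hclosed a' ha'A]
    have hcard5 : ({a, a + d, a + (d + d), a', a' + d} : Finset G).card = 5 := by
      rw [Finset.card_insert_of_notMem (by simp [n1, n2, n3, n4]),
        Finset.card_insert_of_notMem (by simp [n5, n6, n7]),
        Finset.card_insert_of_notMem (by simp [n8, n9]),
        Finset.card_insert_of_notMem (by simp [n10]),
        Finset.card_singleton]
    have := Finset.card_le_card hsub5
    omega
  · -- order 9 : five elements a + i•d, i < 5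
    set S : Finset G := (Finset.range 5).image (fun i => a + i • d) with hS
    have hScard : S.card = 5 := by
      rw [hS, Finset.card_image_of_injOn, Finset.card_range]
      intro i hi j hj hij
      simp only [Finset.coe_range, Set.mem_Iio] at hi hj
      exact hinj a i j (by omega) (by omega) hij
    have hSsub : S ⊆ A := by
      intro x hx
      rw [hS, Finset.mem_image] at hx
      obtain ⟨i, _, rfl⟩ := hx
      exact hm i a ha
    have := Finset.card_le_card hSsub
    omega
end

section
/- Let G be a finite group of even order n ≥ 16 possessing a subgroup H of index 2, and let S ⊆ G \ {0} with |S| = n/2. Then Σ(S) = G, where Σ(S) denotes the set of all sums over nonempty subsets of S in some order. -/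
/-!
Write `A = S ∩ H`, `B = S \ H`, `a = |A|`, `b = |B|` (so `a + b = |H|`) and `M = A ∪ {0}`.

A target `g ∉ H` is `t + s` with `t ∈ M` and `s ∈ B`, by pigeonhole in `H`, since
`|M| + |g - B| > |H|`. For `g ∈ H`, the extreme cases `b = 1` (then `A = H \ {0}`) and `a = 0`
(then `B = G \ H`) are settled by explicit sums of at most four terms. If `b ≥ a + 2`, counting
the pairs `(t, s) ∈ M × B` shows that `-(t + s) + g ∈ B \ {s}` for one of them. Otherwise
`|M| > |H| / 2`, so by Lagrange `M` is not a subgroup, hence some subset sum `x` of `A` lies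
outside `M`, and pigeonhole in `G \ H` between `(M ∪ {x}) + q` and `g - (B \ {q})` finishes.

That `M` is a subgroup as soon as all subset sums of `A` lie in `M` and `|A| ≥ 3` is the heart of
the argument. If `u + u ∉ M` for some `u ∈ A`, then `k + k ∉ M` for every `k ∈ A`, since
otherwise right translation by `k` would permute `M` and carry `u + u` into `u + (u + k) ∈ M`.
But for `v ∉ {u, -u}` the distinct elements `u, v, u + v` of `A` sum to `(u + v) + (u + v)`.
-/

open Pointwise

open Finset

section

variable {G : Type*} [AddGroup G]

def subsetSums (X : Finset G) : Set G :=
  {g | ∃ l : List G, l.Nodup ∧ (∀ x ∈ l, x ∈ X) ∧ l.sum = g}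

theorem zero_mem_subsetSums (X : Finset G) : (0 : G) ∈ subsetSums X :=
  ⟨[], List.nodup_nil, by simp, rfl⟩

theorem mem_subsetSums_of_mem {X : Finset G} {x : G} (hx : x ∈ X) : x ∈ subsetSums X :=
  ⟨[x], List.nodup_singleton x, by simpa, List.sum_singleton⟩

theorem add_mem_subsetSums {X : Finset G} {x y : G} (hx : x ∈ X) (hy : y ∈ X)
    (hxy : x ≠ y) : x + y ∈ subsetSums X :=
  ⟨[x, y], by simpa, by simp [hx, hy], by simp⟩

theorem coe_insert_zero_subset_subsetSums [DecidableEq G] (X : Finset G) :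
    ↑(insert 0 X) ⊆ subsetSums X := by
  intro x hx
  rcases mem_insert.1 hx with rfl | hx
  · exact zero_mem_subsetSums X
  · exact mem_subsetSums_of_mem hx

theorem subsetSums_subset_addSubgroup {H : AddSubgroup G} {X : Finset G}
    (hX : ∀ x ∈ X, x ∈ H) : subsetSums X ⊆ H := by
  rintro _ ⟨l, -, hl, rfl⟩
  exact H.list_sum_mem fun x hx => hX x (hl x hx)

theorem add_mem_subsetSums_insert [DecidableEq G] {X : Finset G} {x s : G}
    (hx : x ∈ subsetSums X) (hs : s ∉ X) : x + s ∈ subsetSums (insert s X) := by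
  obtain ⟨l, hnd, hl, rfl⟩ := hx
  refine ⟨l.concat s, hnd.concat fun h => hs (hl s h), fun y hy => ?_, by simp⟩
  rw [List.concat_eq_append, List.mem_append, List.mem_singleton] at hy
  rcases hy with hy | rfl
  · exact mem_insert_of_mem (hl y hy)
  · exact mem_insert_self y X

theorem add_mem_sumset {S X : Finset G} (hXS : X ⊆ S) {x s : G} (hx : x ∈ subsetSums X)
    (hs : s ∈ S) (hsX : s ∉ X) : x + s ∈ sumset S := by
  obtain ⟨l, hnd, hl, rfl⟩ := hx
  refine ⟨l.concat s, hnd.concat fun h => hsX (hl s h), by simp, fun y hy => ?_, by simp⟩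
  rw [List.concat_eq_append, List.mem_append, List.mem_singleton] at hy
  rcases hy with hy | rfl
  · exact hXS (hl y hy)
  · exact hs

theorem mem_sumset_of_card_lt [DecidableEq G] {S X P Y T : Finset G} {g : G} (hXS : X ⊆ S)
    (hPX : ↑P ⊆ subsetSums X) (hYS : Y ⊆ S) (hYX : ∀ y ∈ Y, y ∉ X) (hPT : P ⊆ T)
    (hYT : ∀ y ∈ Y, g - y ∈ T) (hcard : #T < #P + #Y) : g ∈ sumset S := by
  have hYT' : Y.image (g - ·) ⊆ T := image_subset_iff.2 hYT
  rw [← card_image_of_injective Y sub_right_injective] at hcard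
  obtain ⟨x, hx⟩ := inter_nonempty_of_card_lt_card_add_card hPT hYT' hcard
  obtain ⟨hxP, hxY⟩ := mem_inter.1 hx
  obtain ⟨y, hy, rfl⟩ := mem_image.1 hxY
  simpa using add_mem_sumset hXS (hPX hxP) (hYS hy) (hYX y hy)

theorem mem_of_add_mem_of_forall_add_mem [DecidableEq G] {M : Finset G} {k x : G}
    (hk : ∀ z ∈ M, z + k ∈ M) (hx : x + k ∈ M) : x ∈ M := by
  have himage : M.image (· + k) = M :=
    eq_of_subset_of_card_le (image_subset_iff.2 hk)
      (card_image_of_injective M (add_left_injective k)).ge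
  obtain ⟨z, hz, hzx⟩ := mem_image.1 (himage ▸ hx)
  rwa [← add_right_cancel hzx]

theorem exists_addSubgroup_coe_eq [DecidableEq G] {M : Finset G} (h0 : (0 : G) ∈ M)
    (hadd : ∀ x ∈ M, ∀ y ∈ M, x + y ∈ M) : ∃ K : AddSubgroup G, (K : Set G) = M :=
  ⟨{ carrier := M
     add_mem' := fun hx hy => hadd _ hx _ hy
     zero_mem' := h0
     neg_mem' := fun {x} hx =>
       mem_of_add_mem_of_forall_add_mem (fun z hz => hadd z hz x hx)
         (by rwa [neg_add_cancel]) }, rfl⟩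

theorem add_self_mem_of_subsetSums_subset [DecidableEq G] {A : Finset G} (hA0 : (0 : G) ∉ A)
    (hA : 2 < #A) (hsums : subsetSums A ⊆ ↑(insert 0 A)) {u : G} (hu : u ∈ A) :
    u + u ∈ insert 0 A := by
  set M := insert 0 A
  by_contra huu
  have hne0 : ∀ {x}, x ∈ A → x ≠ 0 := fun hx h => hA0 (h ▸ hx)
  -- if some `k ∈ A` had `k + k ∈ M`, right translation by `k` would permute `M`
  have hdouble : ∀ k ∈ A, k + k ∉ M := by
    intro k hk hkk
    have hkM : ∀ z ∈ M, z + k ∈ M := by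
      intro z hz
      rcases mem_insert.1 hz with rfl | hz
      · rw [zero_add]; exact mem_insert_of_mem hk
      obtain rfl | hzk := eq_or_ne z k
      · exact hkk
      · exact hsums (add_mem_subsetSums hz hk hzk)
    have huk : u + (u + k) ∈ M := by
      rcases mem_insert.1 (hkM u (mem_insert_of_mem hu)) with h | h
      · rw [h, add_zero]; exact mem_insert_of_mem hu
      · exact hsums (add_mem_subsetSums hu h (by simpa using hne0 hk))
    exact huu (mem_of_add_mem_of_forall_add_mem hkM (by rwa [add_assoc]))
  obtain ⟨v, hv, hvu⟩ := exists_mem_notMem_of_card_lt_card (s := {u, -u}) (t := A)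
    (card_le_two.trans_lt hA)
  simp only [mem_insert, mem_singleton, not_or] at hvu
  have huv : u + v ∈ A := by
    rcases mem_insert.1 (hsums (add_mem_subsetSums hu hv (Ne.symm hvu.1))) with h | h
    · exact absurd (eq_neg_of_add_eq_zero_right h) hvu.2
    · exact h
  refine hdouble _ huv (hsums ⟨[u, v, u + v], ?_, ?_, by simp [add_assoc]⟩)
  · simp [Ne.symm hvu.1, hne0 hu, hne0 hv]
  · simp [hu, hv, huv]

theorem exists_addSubgroup_coe_eq_insert_zero [DecidableEq G] {A : Finset G}
    (hA0 : (0 : G) ∉ A) (hA : 2 < #A) (hsums : subsetSums A ⊆ ↑(insert 0 A)) :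
    ∃ K : AddSubgroup G, (K : Set G) = ↑(insert 0 A) := by
  refine exists_addSubgroup_coe_eq (mem_insert_self 0 A) fun x hx y hy => ?_
  rcases mem_insert.1 hx with rfl | hx
  · rwa [zero_add]
  rcases mem_insert.1 hy with rfl | hy
  · rw [add_zero]; exact mem_insert_of_mem hx
  obtain rfl | hxy := eq_or_ne x y
  · exact add_self_mem_of_subsetSums_subset hA0 hA hsums hx
  · exact hsums (add_mem_subsetSums hx hy hxy)

theorem exists_add_add_eq_of_card_lt [DecidableEq G] {M B C : Finset G} {g : G}
    (hMB : ∀ t ∈ M, ∀ s ∈ B, -(t + s) + g ∈ B ∪ C) (hcard : #M * #C + #B < #M * #B) :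
    ∃ t ∈ M, ∃ s ∈ B, ∃ q ∈ B, q ≠ s ∧ t + s + q = g := by
  by_contra! hno
  set f : G × G → G := fun p => -(p.1 + p.2) + g
  have hf : ∀ p, p.1 + p.2 + f p = g := fun p => add_neg_cancel_left _ _
  have hcover : M ×ˢ B ⊆ {p ∈ M ×ˢ B | f p ∈ C} ∪ {p ∈ M ×ˢ B | f p = p.2} := by
    intro p hp
    obtain ⟨ht, hs⟩ := mem_product.1 hp
    rcases mem_union.1 (hMB _ ht _ hs) with hB | hC
    · refine mem_union_right _ (mem_filter.2 ⟨hp, ?_⟩)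
      by_contra h
      exact hno _ ht _ hs _ hB h (hf p)
    · exact mem_union_left _ (mem_filter.2 ⟨hp, hC⟩)
  have hC : #{p ∈ M ×ˢ B | f p ∈ C} ≤ #M * #C := by
    rw [← card_product]
    refine card_le_card_of_injOn (fun p => (p.1, f p)) (fun p hp => ?_) fun p _ p' _ h => ?_
    · obtain ⟨hp, hpC⟩ := mem_filter.1 hp
      exact mem_product.2 ⟨(mem_product.1 hp).1, hpC⟩
    · obtain ⟨h1, h2⟩ := Prod.mk.inj h
      simp only [f, h1, add_left_inj, neg_inj, add_right_inj] at h2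
      exact Prod.ext h1 h2
  -- a pair with `f p = p.2` is determined by `p.2`, since then `p.1 + p.2 + p.2 = g`
  have hB : #{p ∈ M ×ˢ B | f p = p.2} ≤ #B := by
    refine card_le_card_of_injOn Prod.snd (fun p hp => (mem_product.1 (mem_filter.1 hp).1).2)
      fun p hp p' hp' h => ?_
    have e := (hf p).trans (hf p').symm
    rw [(mem_filter.1 hp).2, (mem_filter.1 hp').2, h] at e
    exact Prod.ext (add_right_cancel (add_right_cancel e)) h
  have := (card_le_card hcover).trans (card_union_le _ _)
  rw [card_product] at this
  omega

theorem mem_sumset_of_forall_ne_zero_mem {K : AddSubgroup G} {S : Finset G}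
    (hKS : ∀ z ∈ K, z ≠ 0 → z ∈ S) {x y : G} (hx : x ∈ K) (hy : y ∈ K) (hx0 : x ≠ 0)
    (hy0 : y ≠ 0) (hxy : x ≠ y) {g : G} (hg : g ∈ K) : g ∈ sumset S := by
  obtain hg0 | rfl := ne_or_eq g 0
  · exact ⟨[g], List.nodup_singleton g, by simp, by simpa using hKS g hg hg0,
      List.sum_singleton⟩
  by_cases hinv : ∃ z ∈ K, z ≠ 0 ∧ z + z ≠ 0
  · obtain ⟨z, hz, hz0, hzz⟩ := hinv
    have hzn : z ≠ -z := fun h => hzz (eq_neg_iff_add_eq_zero.1 h)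
    refine ⟨[z, -z], by simpa, by simp, ?_, by simp⟩
    simpa using ⟨hKS z hz hz0, hKS (-z) (K.neg_mem hz) (neg_ne_zero.2 hz0)⟩
  push Not at hinv
  have hxy0 : x + y ≠ 0 := fun h => hxy <| by
    rw [eq_neg_of_add_eq_zero_right h, neg_eq_of_add_eq_zero_right (hinv x hx hx0)]
  refine ⟨[x, y, x + y], ?_, by simp, ?_, ?_⟩
  · simp [hxy, hx0, hy0]
  · simpa using ⟨hKS x hx hx0, hKS y hy hy0, hKS _ (K.add_mem hx hy) hxy0⟩
  · simpa [← add_assoc] using hinv _ (K.add_mem hx hy) hxy0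

theorem mem_sumset_of_compl_subset [DecidableEq G] {H : AddSubgroup G} (hidx : H.index = 2)
    {S Q : Finset G} (hS : ∀ x, x ∉ H → x ∈ S) (hQ : ∀ x ∈ Q, x ∉ H) (hQ5 : 4 < #Q)
    {g : G} (hg : g ∈ H) : g ∈ sumset S := by
  have hneg_add : ∀ {x y}, x ∉ H → y ∈ H → -x + y ∉ H := fun hx hy => by
    rwa [H.add_mem_cancel_right hy, H.neg_mem_iff]
  by_cases hdouble : ∃ s ∉ H, s + s ≠ g
  · obtain ⟨s, hs, hsg⟩ := hdouble
    have hne : s ≠ -s + g := fun h => hsg (by simpa using congrArg (s + ·) h)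
    exact ⟨[s, -s + g], by simpa using hne, by simp,
      by simpa using ⟨hS s hs, hS _ (hneg_add hs hg)⟩, by simp⟩
  push Not at hdouble
  obtain ⟨s₁, hs₁⟩ := card_pos.1 (by omega : 0 < #Q)
  obtain ⟨s₂, hs₂, hs₂'⟩ := exists_mem_notMem_of_card_lt_card
    (s := {s₁, -s₁}) (t := Q)
    (by have := card_le_two (a := s₁) (b := -s₁); omega)
  set w := -(s₁ + s₂) + g
  obtain ⟨s₃, hs₃, hs₃'⟩ := exists_mem_notMem_of_card_lt_card
    (s := {s₁, s₂, w - s₁, w - s₂}) (t := Q)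
    (by have := card_le_four (a := s₁) (b := s₂) (c := w - s₁) (d := w - s₂); omega)
  simp only [mem_insert, mem_singleton, not_or] at hs₂' hs₃'
  have hs₁₂ : s₁ + s₂ ∈ H :=
    (H.add_mem_iff_of_index_two hidx).2 (iff_of_false (hQ _ hs₁) (hQ _ hs₂))
  have hw : w ∈ H := H.add_mem (H.neg_mem hs₁₂) hg
  have h₄₁ : -s₃ + w ≠ s₁ := fun h => hs₃'.2.2.1 (by simp [← h, sub_eq_add_neg])
  have h₄₂ : -s₃ + w ≠ s₂ := fun h => hs₃'.2.2.2 (by simp [← h, sub_eq_add_neg])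
  have h₄₃ : -s₃ + w ≠ s₃ := fun h => hs₂'.2 <| by
    have hwg : w = g := by simpa [hdouble s₃ (hQ _ hs₃)] using congrArg (s₃ + ·) h
    exact eq_neg_of_add_eq_zero_right (neg_eq_zero.1 (add_eq_right.1 hwg))
  refine ⟨[s₁, s₂, s₃, -s₃ + w], ?_, by simp, ?_, ?_⟩
  · simp [Ne.symm hs₂'.1, Ne.symm hs₃'.1, Ne.symm hs₃'.2.1, h₄₁.symm, h₄₂.symm,
      h₄₃.symm]
  · simpa using ⟨hS _ (hQ _ hs₁), hS _ (hQ _ hs₂), hS _ (hQ _ hs₃),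
      hS _ (hneg_add (hQ _ hs₃) hw)⟩
  · simp [w, ← add_assoc]

theorem not_subsetSums_subset_of_card_lt [DecidableEq G] {H : AddSubgroup G} {A : Finset G}
    (hAH : ∀ x ∈ A, x ∈ H) (hA0 : (0 : G) ∉ A) (hA : 2 < #A) (hH : #A + 1 < Nat.card H)
    (hH' : Nat.card H < 2 * (#A + 1)) : ¬ subsetSums A ⊆ ↑(insert 0 A) := by
  intro hsums
  obtain ⟨K, hK⟩ := exists_addSubgroup_coe_eq_insert_zero hA0 hA hsums
  have hKH : K ≤ H := fun x hx => by
    have hx' : x ∈ ((insert 0 A : Finset G) : Set G) := hK ▸ hx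
    rcases mem_insert.1 hx' with rfl | hx
    · exact H.zero_mem
    · exact hAH x hx
  have hKcard : Nat.card K = #A + 1 := by
    rw [← SetLike.coe_sort_coe, Nat.card_coe_set_eq, hK, Set.ncard_coe_finset,
      card_insert_of_notMem hA0]
  have := Nat.eq_of_dvd_of_lt_two_mul (by omega) (AddSubgroup.card_dvd_of_le hKH) (by omega)
  omega

section Split

variable [DecidableEq G] {H : AddSubgroup G} {S A B T Q : Finset G}

theorem mem_sumset_of_card_add_two_le (hAS : A ⊆ S) (hBS : B ⊆ S) (hAH : ∀ x ∈ A, x ∈ H)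
    (hBH : ∀ x ∈ B, x ∉ H) (hA0 : (0 : G) ∉ A) (hQ : ∀ x, x ∈ Q ↔ x ∉ H)
    (hQcard : #Q = #A + #B) (hA : 0 < #A) (hAB : #A + 2 ≤ #B) {g : G} (hg : g ∈ H) :
    g ∈ sumset S := by
  have hBQ : B ⊆ Q := fun x hx => (hQ x).2 (hBH x hx)
  have hcard : #(insert 0 A) * #(Q \ B) + #B < #(insert 0 A) * #B := by
    rw [card_insert_of_notMem hA0, card_sdiff_of_subset hBQ, hQcard, Nat.add_sub_cancel]
    nlinarith
  have hMB : ∀ t ∈ insert 0 A, ∀ s ∈ B, -(t + s) + g ∈ B ∪ (Q \ B) := by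
    intro t ht s hs
    have htH : t ∈ H :=
      subsetSums_subset_addSubgroup hAH (coe_insert_zero_subset_subsetSums A ht)
    have : -(t + s) + g ∉ H := by
      rw [H.add_mem_cancel_right hg, H.neg_mem_iff, H.add_mem_cancel_left htH]
      exact hBH s hs
    rw [mem_union, mem_sdiff, hQ]
    tauto
  obtain ⟨t, ht, s, hs, q, hq, hqs, rfl⟩ := exists_add_add_eq_of_card_lt hMB hcard
  have hsA : s ∉ A := fun h => hBH s hs (hAH s h)
  have hqA : q ∉ insert s A := by
    simpa [hqs] using fun h => hBH q hq (hAH q h)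
  exact add_mem_sumset (insert_subset (hBS hs) hAS)
    (add_mem_subsetSums_insert (coe_insert_zero_subset_subsetSums A ht) hsA) (hBS hq) hqA

theorem mem_sumset_of_card_le_card_add_one (hAS : A ⊆ S) (hBS : B ⊆ S)
    (hAH : ∀ x ∈ A, x ∈ H) (hBH : ∀ x ∈ B, x ∉ H) (hA0 : (0 : G) ∉ A)
    (hQ : ∀ x, x ∈ Q ↔ x ∉ H) (hQcard : #Q = #A + #B) (hHcard : Nat.card H = #A + #B)
    (hA : 2 < #A) (hB : 2 ≤ #B) (hBA : #B ≤ #A + 1) {g : G} (hg : g ∈ H) :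
    g ∈ sumset S := by
  obtain ⟨q, hq⟩ := card_pos.1 (by omega : 0 < #B)
  have hqA : q ∉ A := fun h => hBH q hq (hAH q h)
  obtain ⟨x, hx, hxA⟩ := Set.not_subset.1
    (not_subsetSums_subset_of_card_lt hAH hA0 hA (by omega) (by omega))
  have hPA : ↑(insert x (insert 0 A)) ⊆ subsetSums A := by
    rw [coe_insert, Set.insert_subset_iff]
    exact ⟨hx, coe_insert_zero_subset_subsetSums A⟩
  refine mem_sumset_of_card_lt (P := (insert x (insert 0 A)).image (· + q)) (Y := B.erase q)
    (T := Q)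
    (insert_subset (hBS hq) hAS) ?_ ((erase_subset q B).trans hBS) (fun y hy => ?_) ?_
    (fun y hy => ?_) ?_
  · intro y hy
    obtain ⟨p, hp, rfl⟩ := mem_image.1 hy
    exact add_mem_subsetSums_insert (hPA hp) hqA
  · simpa [ne_of_mem_erase hy] using fun h => hBH y (mem_of_mem_erase hy) (hAH y h)
  · intro y hy
    obtain ⟨p, hp, rfl⟩ := mem_image.1 hy
    rw [hQ, H.add_mem_cancel_left (subsetSums_subset_addSubgroup hAH (hPA hp))]
    exact hBH q hq
  · rw [hQ, sub_eq_add_neg, H.add_mem_cancel_left hg, H.neg_mem_iff]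
    exact hBH y (mem_of_mem_erase hy)
  · rw [card_image_of_injective _ (add_left_injective q), card_insert_of_notMem hxA,
      card_insert_of_notMem hA0, card_erase_of_mem hq]
    omega

theorem mem_sumset_of_notMem_addSubgroup (hidx : H.index = 2) (hAS : A ⊆ S) (hBS : B ⊆ S)
    (hAH : ∀ x ∈ A, x ∈ H) (hBH : ∀ x ∈ B, x ∉ H) (hA0 : (0 : G) ∉ A)
    (hT : ∀ x, x ∈ T ↔ x ∈ H) (hTcard : #T = #A + #B) {g : G} (hg : g ∉ H) :
    g ∈ sumset S := by
  refine mem_sumset_of_card_lt hAS (coe_insert_zero_subset_subsetSums A) hBS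
    (fun y hy hyA => hBH y hy (hAH y hyA)) (fun x hx => (hT x).2 ?_) (fun y hy => ?_) ?_
  · exact subsetSums_subset_addSubgroup hAH (coe_insert_zero_subset_subsetSums A hx)
  · rw [hT, sub_eq_add_neg, H.add_mem_iff_of_index_two hidx, H.neg_mem_iff]
    exact iff_of_false hg (hBH y hy)
  · rw [card_insert_of_notMem hA0]
    omega

theorem mem_sumset_of_mem_addSubgroup (hidx : H.index = 2) (hAS : A ⊆ S) (hBS : B ⊆ S)
    (hAH : ∀ x ∈ A, x ∈ H) (hBH : ∀ x ∈ B, x ∉ H) (hA0 : (0 : G) ∉ A)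
    (hT : ∀ x, x ∈ T ↔ x ∈ H) (hQ : ∀ x, x ∈ Q ↔ x ∉ H) (hTcard : #T = #A + #B)
    (hQcard : #Q = #A + #B) (h8 : 8 ≤ #A + #B) {g : G} (hg : g ∈ H) : g ∈ sumset S := by
  have hAT : A ⊆ T.erase 0 := fun x hx =>
    mem_erase.2 ⟨ne_of_mem_of_not_mem hx hA0, (hT x).2 (hAH x hx)⟩
  have hAcard := card_le_card hAT
  have hTerase : #(T.erase 0) = #T - 1 := card_erase_of_mem ((hT 0).2 H.zero_mem)
  obtain hB | hB := (by omega : #B = 1 ∨ 2 ≤ #B)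
  · have hAeq : A = T.erase 0 := eq_of_subset_of_card_le hAT (by omega)
    have hHA : ∀ z ∈ H, z ≠ 0 → z ∈ A := fun z hz hz0 =>
      hAeq ▸ mem_erase.2 ⟨hz0, (hT z).2 hz⟩
    obtain ⟨x, hx, y, hy, hxy⟩ := one_lt_card.1 (by omega : 1 < #A)
    exact mem_sumset_of_forall_ne_zero_mem (fun z hz hz0 => hAS (hHA z hz hz0)) (hAH x hx)
      (hAH y hy) (ne_of_mem_of_not_mem hx hA0) (ne_of_mem_of_not_mem hy hA0) hxy hg
  obtain hA | hA := Nat.eq_zero_or_pos #A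
  · have hBQ : B = Q := eq_of_subset_of_card_le (fun x hx => (hQ x).2 (hBH x hx)) (by omega)
    exact mem_sumset_of_compl_subset hidx (fun x hx => hBS (hBQ ▸ (hQ x).2 hx)) hBH (by omega)
      hg
  obtain hAB | hAB := le_or_gt (#A + 2) #B
  · exact mem_sumset_of_card_add_two_le hAS hBS hAH hBH hA0 hQ hQcard hA hAB hg
  have hHcard : Nat.card H = #A + #B := by
    rw [← hTcard, ← Nat.card_eq_finsetCard, Nat.card_congr (Equiv.subtypeEquivRight hT)]
  exact mem_sumset_of_card_le_card_add_one hAS hBS hAH hBH hA0 hQ hQcard hHcard (by omega) hB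
    (by omega) hg

end Split

end

theorem stmt_15_general {G : Type*} [AddGroup G] [Fintype G]
    (H : AddSubgroup G) (hidx : H.index = 2)
    (hn : 16 ≤ Fintype.card G)
    (S : Finset G) (h0 : (0 : G) ∉ S) (hcard : S.card = Fintype.card G / 2) :
    sumset S = Set.univ := by
  classical
  have hHcard : Nat.card H * 2 = Fintype.card G := by
    simpa [hidx, Nat.card_eq_fintype_card] using H.card_mul_index
  have hT : #{x | x ∈ H} = Nat.card H := by
    rw [Nat.card_eq_fintype_card, Fintype.card_subtype]
  have hTQ := card_filter_add_card_filter_not (s := univ) (fun x : G => x ∈ H)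
  have hAB := card_filter_add_card_filter_not (s := S) (fun x : G => x ∈ H)
  rw [card_univ] at hTQ
  have hAH : ∀ x ∈ S.filter (· ∈ H), x ∈ H := fun x hx => (mem_filter.1 hx).2
  have hBH : ∀ x ∈ S.filter (· ∉ H), x ∉ H := fun x hx => (mem_filter.1 hx).2
  have hA0 : (0 : G) ∉ S.filter (· ∈ H) := fun h => h0 (mem_filter.1 h).1
  refine Set.eq_univ_of_forall fun g => ?_
  by_cases hg : g ∈ H
  · exact mem_sumset_of_mem_addSubgroup hidx (filter_subset _ S) (filter_subset _ S) hAH hBH hA0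
      (T := {x | x ∈ H}) (Q := {x | x ∉ H}) (by simp) (by simp) (by omega) (by omega) (by omega)
      hg
  · exact mem_sumset_of_notMem_addSubgroup hidx (filter_subset _ S) (filter_subset _ S) hAH hBH hA0
      (T := {x | x ∈ H}) (by simp) (by omega) hg

theorem stmt_15 {G : Type*} [AddGroup G] [Fintype G] [DecidableEq G]
    (H : AddSubgroup G) (hidx : H.index = 2)
    (hn : 16 ≤ Fintype.card G)
    (S : Finset G) (h0 : (0 : G) ∉ S) (hcard : S.card = Fintype.card G / 2) :
    sumset S = Set.univ :=
  stmt_15_general H hidx hn S h0 hcard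
end

section
/- Let G be a finite group of even order n possessing a subgroup H of index 2, and let g ∈ G \ H. If T = S ∪ {0} where S ⊆ G \ {0} with |S| = n/2, then g can be written as t_1 + t_2 with t_1, t_2 ∈ T and t_1 ≠ t_2; consequently g ∈ Σ(S). -/
open Pointwise

theorem stmt_16 {G : Type*} [AddGroup G] [Fintype G] [DecidableEq G]
    (H : AddSubgroup G) (hidx : H.index = 2) (g : G) (hg : g ∉ H)
    (S : Finset G) (h0 : (0 : G) ∉ S) (hcard : S.card = Fintype.card G / 2) :
    (∃ t₁ ∈ insert (0 : G) S, ∃ t₂ ∈ insert (0 : G) S, t₁ ≠ t₂ ∧ t₁ + t₂ = g) ∧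
      g ∈ sumset S := by
  have hn : Fintype.card G = 2 * Nat.card H := by
    rw [← Nat.card_eq_fintype_card, ← AddSubgroup.index_mul_card H, hidx]
  set T : Finset G := insert (0 : G) S with hT
  set U : Finset G := T.image (fun t => g - t) with hU
  have hTcard : T.card = Fintype.card G / 2 + 1 := by
    rw [hT, Finset.card_insert_of_notMem h0, hcard]
  have hUcard : U.card = T.card := by
    rw [hU, Finset.card_image_of_injective _ (fun a b h => sub_right_injective h)]
  have hinter : (T ∩ U).Nonempty := by
    rw [← Finset.card_pos]
    by_contra h
    push_neg at h
    have h' : (T ∩ U).card = 0 := Nat.le_zero.mp h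
    have := Finset.card_union_add_card_inter T U
    rw [h', add_zero, hUcard] at this
    have hle : (T ∪ U).card ≤ Fintype.card G := Finset.card_le_univ _
    rw [this] at hle
    rw [hTcard, hn, Nat.mul_div_cancel_left _ (by norm_num)] at hle
    omega
  obtain ⟨x, hx⟩ := hinter
  rw [Finset.mem_inter, hU, Finset.mem_image] at hx
  obtain ⟨hxT, t₂, ht₂, hxe⟩ := hx
  have hsum : x + t₂ = g := by rw [← hxe, sub_add_cancel]
  have hne : x ≠ t₂ := by
    rintro rfl
    exact hg (hsum ▸ AddSubgroup.add_self_mem_of_index_two hidx x)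
  have main : ∃ t₁ ∈ insert (0 : G) S, ∃ t₂ ∈ insert (0 : G) S, t₁ ≠ t₂ ∧ t₁ + t₂ = g :=
    ⟨x, hxT, t₂, ht₂, hne, hsum⟩
  refine ⟨main, ?_⟩
  rw [hT, Finset.mem_insert] at hxT ht₂
  rcases hxT with rfl | hxS
  · rcases ht₂ with rfl | ht₂S
    · exact absurd rfl hne
    · exact ⟨[t₂], List.nodup_singleton _, by simp, by simpa using ht₂S,
        by simpa using hsum⟩
  · rcases ht₂ with rfl | ht₂S
    · exact ⟨[x], List.nodup_singleton _, by simp, by simpa using hxS,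
        by simp; rw [← hsum, add_zero]⟩
    · exact ⟨[x, t₂], by simp [hne], by simp, by simp [hxS, ht₂S],
        by simp [hsum]⟩
end

section
/- Let G be a finite group of even order n possessing a subgroup H of index 2. Then there exists a subset T ⊆ G \ {0} with |T| = n/2 − 1 such that Σ(T) ≠ G; hence cr(G) ≥ n/2. -/
open Pointwise

theorem stmt_19 {G : Type*} [AddGroup G] [Fintype G] [DecidableEq G]
    (H : AddSubgroup G) (hidx : H.index = 2) :
    (∃ T : Finset G, (0 : G) ∉ T ∧ T.card = Fintype.card G / 2 - 1 ∧
      sumset T ≠ Set.univ) ∧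
    (∀ t : ℕ, (∀ S : Finset G, (0 : G) ∉ S → t ≤ S.card →
        sumset S = Set.univ) → Fintype.card G / 2 ≤ t) := by
  classical
  set T : Finset G := (H : Set G).toFinset.erase 0 with hT
  have h0T : (0 : G) ∉ T := Finset.notMem_erase _ _
  have hcardH : Fintype.card H = Fintype.card G / 2 := by
    have h2 := H.index_mul_card
    rw [hidx] at h2
    simp only [Nat.card_eq_fintype_card] at h2
    omega
  have hTcard : T.card = Fintype.card G / 2 - 1 := by
    rw [hT, Finset.card_erase_of_mem (by simp [H.zero_mem]),
      Set.toFinset_card, ← hcardH]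
    simp
  have hne : H ≠ ⊤ := by
    intro h
    rw [h, AddSubgroup.index_top] at hidx
    omega
  obtain ⟨g, hg⟩ : ∃ g : G, g ∉ H := by
    by_contra h
    push_neg at h
    exact hne (AddSubgroup.ext fun x => ⟨fun _ => trivial, fun _ => h x⟩)
  have hsub : sumset T ≠ Set.univ := by
    intro h
    have : g ∈ sumset T := h ▸ Set.mem_univ g
    obtain ⟨l, -, -, hl, hsum⟩ := this
    apply hg
    rw [← hsum]
    exact AddSubgroup.list_sum_mem _ fun x hx => by
      have := hl x hx
      rw [hT] at this
      have := Finset.mem_of_mem_erase this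
      simpa using this
  refine ⟨⟨T, h0T, hTcard, hsub⟩, fun t ht => ?_⟩
  by_contra hlt
  push_neg at hlt
  have := ht T h0T (by omega)
  exact hsub this
end
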